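/- For every natural number k ≥ 1 and every natural number i ≥ ⌊log₂ k⌋ + 1, the value 2^k occurs exactly 2^{i-1-⌊log₂ k⌋} times as an entry of the list R_i; moreover, the value 1 (= 2^0) occurs exactly 2^i times in R_i for every i ≥ 0. -/

import Mathlib

def phi (i : ℕ) : List ℕ :=
  (List.range (2 ^ (i - 1))).map (fun j => 2 ^ (2 ^ (i - 1) + j))

def R : ℕ → List ℕ
  | 0 => [1]
  | i + 1 => R i ++ R i ++ phi (i + 1)

/-!
Each step doubles every count in `R i` and then appends `φ (i + 1)`, which lists the powers `2 ^ j`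
with `2 ^ i ≤ j < 2 ^ (i + 1)` once each. So for `k ≥ 1` the entry `2 ^ k` enters exactly once, at
step `⌊log₂ k⌋ + 1`, and doubles afterwards, while `1` is in no `φ (i + 1)` and just doubles.
-/

theorem phi_succ_eq_map_range' (i : ℕ) :
    phi (i + 1) = (List.range' (2 ^ i) (2 ^ i)).map (2 ^ ·) := by
  simp [phi, List.range'_eq_map_range, Function.comp_def]

theorem count_pow_phi_succ (i k : ℕ) :
    (phi (i + 1)).count (2 ^ k) = if 2 ^ i ≤ k ∧ k < 2 ^ (i + 1) then 1 else 0 := by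
  rw [phi_succ_eq_map_range', List.count_map_of_injective _ _ (Nat.pow_right_injective le_rfl),
    List.count_range']
  congr 1
  refine propext ⟨?_, fun h => ⟨k - 2 ^ i, by omega, by omega⟩⟩
  rintro ⟨j, hj, rfl⟩
  constructor <;> omega

theorem count_pow_phi_succ_of_ne_zero {k : ℕ} (hk : k ≠ 0) (i : ℕ) :
    (phi (i + 1)).count (2 ^ k) = if Nat.log 2 k = i then 1 else 0 := by
  rw [count_pow_phi_succ]
  exact if_congr (Nat.log_eq_iff (Or.inr ⟨one_lt_two, hk⟩)).symm rfl rfl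

theorem count_R_succ (i a : ℕ) :
    (R (i + 1)).count a = 2 * (R i).count a + (phi (i + 1)).count a := by
  rw [R, List.count_append, List.count_append, two_mul]

theorem count_R_one (i : ℕ) : (R i).count 1 = 2 ^ i := by
  induction i with
  | zero => rfl
  | succ i ih =>
    have hphi : (phi (i + 1)).count 1 = 0 := by simpa using count_pow_phi_succ i 0
    rw [count_R_succ, ih, hphi, pow_succ]
    ring

theorem count_R_pow {k : ℕ} (hk : k ≠ 0) (i : ℕ) :
    (R i).count (2 ^ k) = if Nat.log 2 k < i then 2 ^ (i - 1 - Nat.log 2 k) else 0 := by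
  induction i with
  | zero =>
    have : 1 ≠ 2 ^ k := (Nat.one_lt_two_pow hk).ne
    simp [R, this]
  | succ i ih =>
    rw [count_R_succ, ih, count_pow_phi_succ_of_ne_zero hk]
    rcases lt_trichotomy (Nat.log 2 k) i with h | h | h
    · rw [if_pos h, if_neg h.ne, if_pos (by omega), ← pow_succ', add_zero]
      congr 1
      omega
    · simp [h]
    · rw [if_neg (by omega), if_neg h.ne', if_neg (by omega)]

theorem R_count_powers :
    (∀ k : ℕ, 1 ≤ k → ∀ i : ℕ, Nat.log 2 k + 1 ≤ i →
      (R i).count (2 ^ k) = 2 ^ (i - 1 - Nat.log 2 k)) ∧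
    (∀ i : ℕ, (R i).count 1 = 2 ^ i) :=
  ⟨fun k hk i hi => by rw [count_R_pow (by omega), if_pos (by omega)], count_R_one⟩
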